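/- arXiv:1204.2306 — 2 statements merged into one kernel-verified Lean document; each statement's English description precedes it below -/
import Mathlib

section
/- Let T be a tree with ℓ ≥ 2 leaves in which each heavy vertex has at least one light neighbor. Let S be the set of heavy vertices of T having exactly one light neighbor, let h be the number of heavy edges of T, let s = |S|, and let t be the size of a maximum matching of the subgraph of T induced by S. Then P(T) = ℓ − h + s − t − 1. -/
namespace PaperPC

open SimpleGraph

variable {V : Type*}

/-- The degree of a vertex, via the cardinality of its neighbor set. -/
noncomputable def ndeg (G : SimpleGraph V) (v : V) : ℕ := (G.neighborSet v).ncard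

/-- A linear forest: an acyclic graph of maximum degree at most 2,
i.e. a vertex-disjoint union of paths.  A spanning linear subforest of `G`
is exactly a path covering of `G` (isolated vertices are one-vertex paths). -/
def IsLinearForest (H : SimpleGraph V) : Prop :=
  H.IsAcyclic ∧ ∀ v, ndeg H v ≤ 2

/-- The number of paths of a path covering = number of connected components. -/
noncomputable def numPaths (H : SimpleGraph V) : ℕ := Nat.card H.ConnectedComponent

/-- The path covering number `P(G)`. -/
noncomputable def pathCoverNumber (G : SimpleGraph V) : ℕ :=
  sInf {k | ∃ H ≤ G, IsLinearForest H ∧ numPaths H = k}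

/-- `H` is a minimum path covering of `G`. -/
def IsMinPathCover (G H : SimpleGraph V) : Prop :=
  H ≤ G ∧ IsLinearForest H ∧ numPaths H = pathCoverNumber G

open scoped Classical in
/-- The path sequence of a path covering: the multiset of the numbers of vertices
of its paths (a multiset encodes the nondecreasing ordered sequence). -/
noncomputable def pathSeq [Fintype V] (H : SimpleGraph V) : Multiset ℕ :=
  (Finset.univ : Finset H.ConnectedComponent).val.map fun c => c.supp.ncard

/-- `G` admits a unique path sequence. -/
def UniquePathSequence [Fintype V] (G : SimpleGraph V) : Prop :=
  ∀ H₁ H₂ : SimpleGraph V, IsMinPathCover G H₁ → IsMinPathCover G H₂ →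
    pathSeq H₁ = pathSeq H₂

/-- Number of leaves (vertices of degree 1). -/
noncomputable def numLeaves (G : SimpleGraph V) : ℕ := {v | ndeg G v = 1}.ncard

/-- Number of heavy edges (edges both of whose endpoints have degree > 2). -/
noncomputable def numHeavyEdges (G : SimpleGraph V) : ℕ :=
  {e ∈ G.edgeSet | ∀ v ∈ e, 2 < ndeg G v}.ncard

/-- Number of edges. -/
noncomputable def numEdges (G : SimpleGraph V) : ℕ := G.edgeSet.ncard

/-- A graph is 2-sparse if no two adjacent vertices both have degree > 2. -/
def TwoSparse (G : SimpleGraph V) : Prop :=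
  ∀ u v, G.Adj u v → ndeg G u ≤ 2 ∨ ndeg G v ≤ 2

/-- `G` is a path graph. -/
def IsPathGraph (G : SimpleGraph V) : Prop := G.IsTree ∧ ∀ v, ndeg G v ≤ 2

/-- `G` is a cycle graph. -/
def IsCycleGraph (G : SimpleGraph V) : Prop := G.Connected ∧ ∀ v, ndeg G v = 2

/-- A generalized star: a tree with exactly one heavy vertex (the center) in which
all vines have the same number of vertices (equivalently, all leaves are at the same
distance from the center). -/
def IsGenStar (G : SimpleGraph V) : Prop :=
  G.IsTree ∧ ∃ c k, 2 < ndeg G c ∧ (∀ v, v ≠ c → ndeg G v ≤ 2) ∧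
    ∀ v, ndeg G v = 1 → G.dist c v = k

/-- An L(2,1)-labeling. -/
def IsL21Labeling (G : SimpleGraph V) (f : V → ℕ) : Prop :=
  (∀ u v, G.Adj u v → 2 ≤ Nat.dist (f u) (f v)) ∧
  (∀ u v, G.dist u v = 2 → 1 ≤ Nat.dist (f u) (f v))

/-- `λ(G)`: the least `k` such that `G` has an L(2,1)-labeling with labels in `{0,…,k}`. -/
noncomputable def lambdaNum (G : SimpleGraph V) : ℕ :=
  sInf {k | ∃ f : V → ℕ, IsL21Labeling G f ∧ ∀ v, f v ≤ k}

/-- A λ-labeling: an L(2,1)-labeling with maximum label `λ(G)`. -/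
def IsLambdaLabeling (G : SimpleGraph V) (f : V → ℕ) : Prop :=
  IsL21Labeling G f ∧ (∀ v, f v ≤ lambdaNum G) ∧ ∃ v, f v = lambdaNum G

/-- The set of holes of a labeling: unused labels `h` with `1 ≤ h ≤ λ(G) - 1`. -/
def labHoles (G : SimpleGraph V) (f : V → ℕ) : Set ℕ :=
  {h | 1 ≤ h ∧ h + 1 ≤ lambdaNum G ∧ ∀ v, f v ≠ h}

/-- The hole index `ρ(G)`: minimum number of holes over all λ-labelings. -/
noncomputable def holeIndex (G : SimpleGraph V) : ℕ :=
  sInf {k | ∃ f : V → ℕ, IsLambdaLabeling G f ∧ (labHoles G f).ncard = k}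

open scoped Classical in
/-- The island sequence of a labeling: the multiset of cardinalities of the maximal
intervals `[a,b]` of consecutive integers all used by the labeling. -/
noncomputable def islandSeq [Fintype V] (G : SimpleGraph V) (f : V → ℕ) : Multiset ℕ :=
  (((Finset.range (lambdaNum G + 1)) ×ˢ (Finset.range (lambdaNum G + 1))).filter
    (fun q => q.1 ≤ q.2 ∧ (∀ x ∈ Finset.Icc q.1 q.2, ∃ v, f v = x) ∧
      (q.1 = 0 ∨ ∀ v, f v ≠ q.1 - 1) ∧ ∀ v, f v ≠ q.2 + 1)).val.map
    fun q => q.2 - q.1 + 1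

/-- `G` admits (at least) two distinct island sequences. -/
def MultipleIslandSequences [Fintype V] (G : SimpleGraph V) : Prop :=
  ∃ f g : V → ℕ, IsLambdaLabeling G f ∧ IsLambdaLabeling G g ∧
    (labHoles G f).ncard = holeIndex G ∧ (labHoles G g).ncard = holeIndex G ∧
    islandSeq G f ≠ islandSeq G g

/-- A vine: a maximal path one of whose endpoints (`a`) is a leaf and all of whose
vertices are light.  Maximality: any light vertex adjacent to the other end already
lies on the path. -/
def IsVine (G : SimpleGraph V) {a b : V} (p : G.Walk a b) : Prop :=
  p.IsPath ∧ ndeg G a = 1 ∧ (∀ v ∈ p.support, ndeg G v ≤ 2) ∧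
  ∀ c, G.Adj b c → ndeg G c ≤ 2 → c ∈ p.support

/-- A vine with center `v`: the (heavy) vertex adjacent to the non-leaf end of the vine. -/
def IsVineWithCenter (G : SimpleGraph V) {a b : V} (p : G.Walk a b) (v : V) : Prop :=
  IsVine G p ∧ G.Adj b v ∧ 2 < ndeg G v

/-- The matching number of the subgraph of `G` induced by `S`. -/
noncomputable def matchingNumberOn (G : SimpleGraph V) (S : Set V) : ℕ :=
  sSup {k | ∃ M : Set (Sym2 V), M ⊆ G.edgeSet ∧ (∀ e ∈ M, ∀ v ∈ e, v ∈ S) ∧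
    (∀ e ∈ M, ∀ f ∈ M, e ≠ f → ∀ v, v ∈ e → v ∉ f) ∧ M.ncard = k}

/-- Labels used in the family `F`: `A`, or `B k` where `k` records the number of
vertices of each vine of the labeled generalized star that produced the label. -/
inductive Lab | A | B (k : ℕ)

/-- A labeled generalized star with center `c` whose vines have `k` vertices each
(equivalently, every leaf is at distance `k` from `c`); the degenerate case
`deg c = 2` is the convention regarding a path of length `2k` as a labeled
generalized star with two vines.  The neighbors of the center are labeled `B k`,
the other non-leaf vertices (and the center) are labeled `A`, leaves are unlabeled. -/
def IsLGenStar {W : Type*} (H : SimpleGraph W) (c : W) (k : ℕ)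
    (lab : W → Option Lab) : Prop :=
  H.IsTree ∧ 2 ≤ ndeg H c ∧ (∀ v, v ≠ c → ndeg H v ≤ 2) ∧
  (∀ v, ndeg H v = 1 → H.dist c v = k) ∧
  lab c = some Lab.A ∧
  (∀ v, H.Adj c v → lab v = some (Lab.B k)) ∧
  (∀ v, v ≠ c → ¬H.Adj c v → ndeg H v = 1 → lab v = none) ∧
  (∀ v, v ≠ c → ¬H.Adj c v → 2 ≤ ndeg H v → lab v = some Lab.A)

/-- A labeled path: a path with at least three vertices, non-leaf vertices labeled `A`. -/
def IsLPath {W : Type*} (H : SimpleGraph W) (lab : W → Option Lab) : Prop :=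
  H.IsTree ∧ (∀ v, ndeg H v ≤ 2) ∧ 3 ≤ Nat.card W ∧
  (∀ v, ndeg H v = 1 → lab v = none) ∧
  ∀ v, 2 ≤ ndeg H v → lab v = some Lab.A

/-- The induced subgraph of `T` on `s` is a labeled generalized star. -/
def LGenStarOn (T : SimpleGraph V) (s : Set V) (c : V) (k : ℕ)
    (lab : V → Option Lab) : Prop :=
  ∃ hc : c ∈ s, IsLGenStar (T.induce s) ⟨c, hc⟩ k fun v => lab v.1

/-- The induced subgraph of `T` on `s` is a labeled path. -/
def LPathOn (T : SimpleGraph V) (s : Set V) (lab : V → Option Lab) : Prop :=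
  IsLPath (T.induce s) fun v => lab v.1

/-- The family `F` of labeled trees, realized as induced subgraphs (on vertex sets `s`)
of an ambient graph `T`:  start from a labeled generalized star with at least three
vines or from a labeled path, and repeatedly attach, via a single new edge, a labeled
generalized star with at least three vines at a vertex labeled `A` (Type-1), a labeled
path by one of its non-leaf vertices at a vertex labeled `A` (Type-2), or a labeled
generalized star whose vines have the same number of vertices `k` as those of the star
that labeled `u` with `B k`, at a vertex `u` labeled `B k` (Type-3). -/
inductive InF (T : SimpleGraph V) : Set V → (V → Option Lab) → Prop
  | base_star (s : Set V) (c : V) (k : ℕ) (lab : V → Option Lab) :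
      LGenStarOn T s c k lab → 3 ≤ {w ∈ s | T.Adj c w}.ncard → InF T s lab
  | base_path (s : Set V) (lab : V → Option Lab) :
      LPathOn T s lab → InF T s lab
  | type1 (s : Set V) (lab : V → Option Lab) (t : Set V) (lab' : V → Option Lab)
      (u c : V) (k : ℕ) :
      InF T s lab → Disjoint s t → u ∈ s → c ∈ t → lab u = some Lab.A →
      LGenStarOn T t c k lab' → 3 ≤ {w ∈ t | T.Adj c w}.ncard →
      (∀ x ∈ s, ∀ y ∈ t, (T.Adj x y ↔ x = u ∧ y = c)) →
      (∀ x ∈ s, lab' x = lab x) →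
      InF T (s ∪ t) lab'
  | type2 (s : Set V) (lab : V → Option Lab) (t : Set V) (lab' : V → Option Lab)
      (u v : V) :
      InF T s lab → Disjoint s t → u ∈ s → v ∈ t → lab u = some Lab.A →
      LPathOn T t lab' → 2 ≤ {w ∈ t | T.Adj v w}.ncard →
      (∀ x ∈ s, ∀ y ∈ t, (T.Adj x y ↔ x = u ∧ y = v)) →
      (∀ x ∈ s, lab' x = lab x) →
      InF T (s ∪ t) lab'
  | type3 (s : Set V) (lab : V → Option Lab) (t : Set V) (lab' : V → Option Lab)
      (u c : V) (k : ℕ) :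
      InF T s lab → Disjoint s t → u ∈ s → c ∈ t → lab u = some (Lab.B k) →
      LGenStarOn T t c k lab' →
      (∀ x ∈ s, ∀ y ∈ t, (T.Adj x y ↔ x = u ∧ y = c)) →
      (∀ x ∈ s, lab' x = lab x) →
      InF T (s ∪ t) lab'

/-- `G` is obtained from the tree `T` by expanding each edge of `T` into a complete
graph of arbitrary order: there is an embedding `ι` of the vertices of `T` and an
assignment `b` of a block of vertices of `G` to each edge of `T` such that an original
vertex lies in the block of an edge iff it is an endpoint of that edge, blocks of
distinct edges meet only in original vertices, every vertex of `G` lies in some block,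
and two distinct vertices of `G` are adjacent iff they lie in a common block. -/
def IsBlockExpansion {U W : Type*} (T : SimpleGraph U) (G : SimpleGraph W) : Prop :=
  ∃ (ι : U ↪ W) (b : Sym2 U → Set W),
    (∀ (u : U), ∀ e ∈ T.edgeSet, (ι u ∈ b e ↔ u ∈ e)) ∧
    (∀ e ∈ T.edgeSet, ∀ f ∈ T.edgeSet, e ≠ f → b e ∩ b f ⊆ Set.range ι) ∧
    (∀ w : W, ∃ e ∈ T.edgeSet, w ∈ b e) ∧
    (∀ x y : W, G.Adj x y ↔ x ≠ y ∧ ∃ e ∈ T.edgeSet, x ∈ b e ∧ y ∈ b e)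

/-!
Compare a path covering `H ≤ T` with `T` through the degrees of the heavy vertices of `T`. A forest
has `|V| - |E|` components and the heavy vertices of a tree have total excess
`∑ (deg v - 2) = ℓ - 2`, so counting edges by the degrees of heavy vertices gives
`#paths(H) = ℓ - 1 - h + ∑_{v heavy} (2 - deg_H v) + #(heavy edges of H) + #(light-light edges
of T missing from H)`. A vertex of `S` keeping no heavy edge has `deg_H v ≤ 1`, and at most
`#(heavy edges of H) + t` vertices of `S` keep one, so the last three terms add up to at least
`s - t`. Equality holds for the covering that keeps every light-light edge, one light neighbour of
each vertex of `S`, two light neighbours of every other heavy vertex, and a maximum matching of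
`T[S]`.
-/

open Finset

lemma ndeg_eq_degree [Fintype V] (G : SimpleGraph V) [DecidableRel G.Adj] (v : V) :
    ndeg G v = G.degree v := by
  rw [ndeg, ← card_neighborSet_eq_degree, Set.ncard_eq_toFinset_card', Set.toFinset_card]

lemma ndeg_le_of_le [Finite V] {G H : SimpleGraph V} (hle : H ≤ G) (v : V) :
    ndeg H v ≤ ndeg G v :=
  Set.ncard_le_ncard (neighborSet_mono hle v) (Set.toFinite _)

lemma sum_ndeg_eq_twice_ncard_edgeSet [Fintype V] (G : SimpleGraph V) :
    ∑ v, ndeg G v = 2 * G.edgeSet.ncard := by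
  classical
  simp_rw [ndeg_eq_degree, sum_degrees_eq_twice_card_edges, ← coe_edgeFinset,
    Set.ncard_coe_finset]

def inducedEdges (G : SimpleGraph V) (p : V → Prop) : Set (Sym2 V) :=
  {e ∈ G.edgeSet | ∀ v ∈ e, p v}

lemma inducedEdges_mono {G H : SimpleGraph V} (hle : H ≤ G) (p : V → Prop) :
    inducedEdges H p ⊆ inducedEdges G p :=
  fun _ he => ⟨edgeSet_mono hle he.1, he.2⟩

lemma sum_ndeg_filter [Fintype V] (G : SimpleGraph V) (p : V → Prop) [DecidablePred p] :
    ∑ v with p v, (ndeg G v : ℤ) = G.edgeSet.ncard + (inducedEdges G p).ncard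
      - (inducedEdges G (¬ p ·)).ncard := by
  classical
  have hcard : ∀ q : Sym2 V → Prop, {e ∈ G.edgeSet | q e}.ncard = #{e ∈ G.edgeFinset | q e} :=
    fun q => by rw [← Set.ncard_coe_finset]; congr; ext; simp
  have hcount : ∀ e ∈ G.edgeFinset, ∑ v with p v, (if v ∈ e then 1 else 0 : ℤ) =
      1 + (if ∀ v ∈ e, p v then 1 else 0) - (if ∀ v ∈ e, ¬ p v then 1 else 0) := by
    intro e he
    induction e using Sym2.ind with
    | _ a b =>
    have hab : a ≠ b := G.ne_of_adj (mem_edgeFinset.mp he)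
    rw [sum_filter, Fintype.sum_eq_add a b hab fun v hv => by simp [hv.1, hv.2]]
    by_cases ha : p a <;> by_cases hb : p b <;> simp [ha, hb, hab, hab.symm]
  calc ∑ v with p v, (ndeg G v : ℤ)
      = ∑ v with p v, ∑ e ∈ G.edgeFinset, (if v ∈ e then 1 else 0 : ℤ) := by
        refine sum_congr rfl fun v _ => ?_
        rw [sum_boole, ndeg_eq_degree, ← card_incidenceFinset_eq_degree,
          incidenceFinset_eq_filter]
    _ = ∑ e ∈ G.edgeFinset, ∑ v with p v, (if v ∈ e then 1 else 0 : ℤ) := sum_comm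
    _ = ∑ e ∈ G.edgeFinset, (1 + (if ∀ v ∈ e, p v then 1 else 0)
          - (if ∀ v ∈ e, ¬ p v then 1 else 0) : ℤ) := sum_congr rfl hcount
    _ = _ := by
        rw [sum_sub_distrib, sum_add_distrib, sum_boole, sum_boole, sum_const, inducedEdges,
          inducedEdges, hcard, hcard, ← coe_edgeFinset, Set.ncard_coe_finset]
        simp only [nsmul_eq_mul, mul_one]
        congr! 4
        ext; simp

lemma IsTree.sum_heavy_ndeg_sub_two [Fintype V] [Nontrivial V] {T : SimpleGraph V}
    (hT : T.IsTree) : ∑ v with 2 < ndeg T v, ((ndeg T v : ℤ) - 2) = numLeaves T - 2 := by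
  classical
  have hpos (v : V) : 0 < ndeg T v := by
    rw [ndeg_eq_degree]
    exact hT.connected.preconnected.minDegree_pos_of_nontrivial.trans_le (minDegree_le_degree _ _)
  have hedges : T.edgeSet.ncard + 1 = Fintype.card V := by
    rw [← coe_edgeFinset, Set.ncard_coe_finset, hT.card_edgeFinset]
  have hleaves : (numLeaves T : ℤ) = ∑ v, if ndeg T v = 1 then 1 else 0 := by
    rw [sum_boole, numLeaves, ← Set.ncard_coe_finset]
    simp
  have hsplit (v : V) : (ndeg T v : ℤ) - 2 =
      (if 2 < ndeg T v then (ndeg T v : ℤ) - 2 else 0) - if ndeg T v = 1 then 1 else 0 := by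
    have := hpos v
    split_ifs <;> omega
  have htotal : ∑ v, ((ndeg T v : ℤ) - 2) = -2 := by
    rw [sum_sub_distrib, ← Nat.cast_sum, sum_ndeg_eq_twice_ncard_edgeSet, sum_const, card_univ,
      nsmul_eq_mul]
    push_cast
    omega
  rw [sum_filter, hleaves]
  rw [sum_congr rfl fun v _ => hsplit v, sum_sub_distrib] at htotal
  linarith

/-- Each component `c` is a tree, so its degree sum is `2 * (|c| - 1)`. -/
lemma IsAcyclic.numPaths_add_ncard_edgeSet [Fintype V] {H : SimpleGraph V} (hH : H.IsAcyclic) :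
    numPaths H + H.edgeSet.ncard = Fintype.card V := by
  classical
  have hcomp (c : H.ConnectedComponent) : ∑ u : c, ndeg H u + 2 = 2 * Fintype.card c := by
    have hdeg (u : c) : ndeg c.toSimpleGraph u = ndeg H u := by
      have hnbr : c.toSimpleGraph.neighborSet u = Subtype.val ⁻¹' H.neighborSet u := by
        ext w
        simp [ConnectedComponent.toSimpleGraph]
      rw [ndeg, ndeg, hnbr, Set.ncard_preimage_of_injective_subset_range Subtype.val_injective]
      exact fun w hw => ⟨⟨w, c.mem_supp_of_adj_mem_supp u.2 hw⟩, rfl⟩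
    have htree := (hH.isTree_connectedComponent c).card_edgeFinset
    have hsum := sum_ndeg_eq_twice_ncard_edgeSet c.toSimpleGraph
    rw [← coe_edgeFinset, Set.ncard_coe_finset] at hsum
    simp only [hdeg] at hsum
    omega
  have hsum : ∑ v, ndeg H v = ∑ c : H.ConnectedComponent, ∑ u : c, ndeg H u := by
    rw [← (Equiv.sigmaFiberEquiv H.connectedComponentMk).sum_comp, Fintype.sum_sigma]
    rfl
  have hcard : Fintype.card V = ∑ c : H.ConnectedComponent, Fintype.card c := by
    rw [← Fintype.card_congr (Equiv.sigmaFiberEquiv H.connectedComponentMk), Fintype.card_sigma]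
    rfl
  have htotal := sum_congr rfl fun c (_ : c ∈ univ) => hcomp c
  rw [sum_add_distrib, ← hsum, sum_ndeg_eq_twice_ncard_edgeSet, sum_const, ← mul_sum, ← hcard,
    card_univ, smul_eq_mul] at htotal
  rw [numPaths, Nat.card_eq_fintype_card]
  omega

def IsMatchingWithin (G : SimpleGraph V) (S : Set V) (M : Set (Sym2 V)) : Prop :=
  M ⊆ G.edgeSet ∧ (∀ e ∈ M, ∀ v ∈ e, v ∈ S) ∧ M.Pairwise fun e f => ∀ v ∈ e, v ∉ f

section Matching

variable {G : SimpleGraph V} {S : Set V} {M : Set (Sym2 V)}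

lemma ncard_le_matchingNumberOn [Finite V] (hM : IsMatchingWithin G S M) :
    M.ncard ≤ matchingNumberOn G S :=
  le_csSup ⟨Nat.card (Sym2 V), by rintro k ⟨M, -, -, -, rfl⟩; exact Set.ncard_le_card M⟩
    ⟨M, hM.1, hM.2.1, hM.2.2, rfl⟩

lemma exists_isMatchingWithin_ncard_eq [Finite V] (G : SimpleGraph V) (S : Set V) :
    ∃ M, IsMatchingWithin G S M ∧ M.ncard = matchingNumberOn G S := by
  obtain ⟨M, hMG, hMS, hMdisj, hcard⟩ := Nat.sSup_mem (s := {k | ∃ M : Set (Sym2 V),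
      M ⊆ G.edgeSet ∧ (∀ e ∈ M, ∀ v ∈ e, v ∈ S) ∧
      (∀ e ∈ M, ∀ f ∈ M, e ≠ f → ∀ v, v ∈ e → v ∉ f) ∧ M.ncard = k})
    ⟨0, ∅, by simp⟩ ⟨Nat.card (Sym2 V), by rintro k ⟨M, -, -, -, rfl⟩; exact Set.ncard_le_card M⟩
  exact ⟨M, ⟨hMG, hMS, hMdisj⟩, hcard⟩

lemma IsMatchingWithin.ndeg_fromEdgeSet_le_one [Finite V] (hM : IsMatchingWithin G S M) (v : V) :
    ndeg (fromEdgeSet M) v ≤ 1 := by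
  refine (Set.ncard_le_one (Set.toFinite _)).mpr fun w hw w' hw' => ?_
  simp only [mem_neighborSet, fromEdgeSet_adj] at hw hw'
  by_contra hne
  exact hM.2.2 hw.1 hw'.1 (fun h => hne (Sym2.congr_right.mp h)) v (Sym2.mem_mk_left _ _)
    (Sym2.mem_mk_left _ _)

lemma IsMatchingWithin.ndeg_fromEdgeSet_eq_zero (hM : IsMatchingWithin G S M) {v : V}
    (hv : v ∉ S) : ndeg (fromEdgeSet M) v = 0 := by
  have hempty : (fromEdgeSet M).neighborSet v = ∅ :=
    Set.eq_empty_of_forall_notMem fun w h => hv (hM.2.1 _ h.1 v (Sym2.mem_mk_left _ _))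
  rw [ndeg, hempty, Set.ncard_empty]

lemma IsMatchingWithin.sum_ndeg_fromEdgeSet [Fintype V] (hM : IsMatchingWithin G S M)
    (p : V → Prop) [DecidablePred p] (hS : ∀ v ∈ S, p v) :
    ∑ v with p v, ndeg (fromEdgeSet M) v = 2 * M.ncard := by
  have hsupp : ∀ v ∈ univ, ndeg (fromEdgeSet M) v ≠ 0 → p v := fun v _ h =>
    hS v (not_not.mp fun hvS => h (hM.ndeg_fromEdgeSet_eq_zero hvS))
  rw [sum_filter_of_ne hsupp, sum_ndeg_eq_twice_ncard_edgeSet, edgeSet_fromEdgeSet]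
  congr 2
  exact sdiff_eq_left.mpr (Set.disjoint_left.mpr fun e he => G.not_isDiag_of_mem_edgeSet (hM.1 he))

end Matching

lemma pairwise_insert_of_disjoint {M : Set (Sym2 V)} {e : Sym2 V}
    (hM : M.Pairwise fun e f => ∀ v ∈ e, v ∉ f) (he : ∀ f ∈ M, ∀ v ∈ e, v ∉ f) :
    (insert e M).Pairwise fun e f => ∀ v ∈ e, v ∉ f :=
  Set.pairwise_insert.mpr ⟨hM, fun f hf _ => ⟨he f hf, fun v hvf hve => he f hf v hve hvf⟩⟩

/-- Delete the edges of `E` one at a time; an edge whose deletion leaves both of its ends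
uncovered goes into the matching. -/
lemma exists_matching_card_le_card_add [DecidableEq V] (E : Finset (Sym2 V)) (A : Finset V)
    (hA : ∀ a ∈ A, ∃ e ∈ E, a ∈ e) :
    ∃ M ⊆ E, (∀ e ∈ M, ∀ v ∈ e, v ∈ A) ∧
      (M : Set (Sym2 V)).Pairwise (fun e f => ∀ v ∈ e, v ∉ f) ∧ #A ≤ #E + #M := by
  induction E using Finset.induction_on generalizing A with
  | empty =>
    obtain rfl : A = ∅ := eq_empty_of_forall_notMem fun a ha => by simpa using hA a ha
    exact ⟨∅, by simp⟩
  | @insert e E heE ih =>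
    induction e using Sym2.ind with
    | _ x y =>
    set A' := {a ∈ A | ∃ f ∈ E, a ∈ f}
    obtain ⟨M, hME, hMA, hMdisj, hcard⟩ := ih A' fun a ha => (mem_filter.mp ha).2
    have hsplit : #(A \ A') + #A' = #A := card_sdiff_add_card_eq_card (filter_subset _ _)
    have hsub : A \ A' ⊆ {x, y} := by
      intro a ha
      obtain ⟨haA, haA'⟩ := mem_sdiff.mp ha
      obtain ⟨f, hf, haf⟩ := hA a haA
      rcases mem_insert.mp hf with rfl | hf
      · simpa using haf
      · exact absurd (mem_filter.mpr ⟨haA, f, hf, haf⟩) haA'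
    have hMA' : ∀ f ∈ M, ∀ v ∈ f, v ∉ A \ A' := fun f hf v hv h =>
      (mem_sdiff.mp h).2 (hMA f hf v hv)
    by_cases hsmall : #(A \ A') ≤ 1
    · refine ⟨M, hME.trans (subset_insert _ _), fun f hf v hv => (mem_filter.mp
        (hMA f hf v hv)).1, hMdisj, ?_⟩
      rw [card_insert_of_notMem heE]
      omega
    have hboth : A \ A' = {x, y} :=
      eq_of_subset_of_card_le hsub (card_le_two.trans (by omega))
    have hxy : ∀ v ∈ s(x, y), v ∈ A \ A' := fun v hv => by simpa [hboth] using hv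
    refine ⟨insert s(x, y) M, insert_subset_insert _ hME, ?_, ?_, ?_⟩
    · intro f hf v hv
      rcases mem_insert.mp hf with rfl | hf
      · exact (mem_sdiff.mp (hxy v hv)).1
      · exact (mem_filter.mp (hMA f hf v hv)).1
    · rw [coe_insert]
      exact pairwise_insert_of_disjoint hMdisj fun f hf v hv hvf => hMA' f hf v hvf (hxy v hv)
    · have hnew : s(x, y) ∉ M := fun h => heE (hME h)
      rw [card_insert_of_notMem heE, card_insert_of_notMem hnew]
      have := card_le_card hsub
      have := card_le_two (a := x) (b := y)
      omega

def lightNeighborSet (T : SimpleGraph V) (v : V) : Set V := {w | T.Adj v w ∧ ndeg T w ≤ 2}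

lemma ndeg_le_one_of_forall_adj_light [Finite V] {T H : SimpleGraph V} {v : V} (hHT : H ≤ T)
    (hv : (lightNeighborSet T v).ncard = 1) (hlight : ∀ w, H.Adj v w → ndeg T w ≤ 2) :
    ndeg H v ≤ 1 :=
  hv ▸ Set.ncard_le_ncard fun w hw => ⟨hHT hw, hlight w hw⟩

section LowerBound

variable [Fintype V] {T H : SimpleGraph V}

lemma numPaths_eq_of_isAcyclic [Nontrivial V] (hT : T.IsTree) (hH : H.IsAcyclic) :
    (numPaths H : ℤ) = numLeaves T - 1 - numHeavyEdges T
      + ∑ v with 2 < ndeg T v, (2 - (ndeg H v : ℤ)) + (inducedEdges H (2 < ndeg T ·)).ncard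
      + ((inducedEdges T (¬ 2 < ndeg T ·)).ncard - (inducedEdges H (¬ 2 < ndeg T ·)).ncard) := by
  classical
  have hpaths := IsAcyclic.numPaths_add_ncard_edgeSet hH
  have hedges : T.edgeSet.ncard + 1 = Fintype.card V := by
    rw [← coe_edgeFinset, Set.ncard_coe_finset, hT.card_edgeFinset]
  have hdegH := sum_ndeg_filter H (2 < ndeg T ·)
  have hdegT := sum_ndeg_filter T (2 < ndeg T ·)
  have hleaves := IsTree.sum_heavy_ndeg_sub_two hT
  have hheavy : numHeavyEdges T = (inducedEdges T (2 < ndeg T ·)).ncard := rfl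
  rw [sum_sub_distrib] at hleaves
  rw [sum_sub_distrib, hheavy]
  push_cast at *
  linarith

lemma ncard_sub_matchingNumberOn_le {S : Set V} (hHT : H ≤ T) (hdeg : ∀ v, ndeg H v ≤ 2)
    (hS : ∀ v ∈ S, 2 < ndeg T v ∧ (lightNeighborSet T v).ncard = 1) :
    (S.ncard : ℤ) - matchingNumberOn T S ≤
      ∑ v with 2 < ndeg T v, (2 - (ndeg H v : ℤ)) + (inducedEdges H (2 < ndeg T ·)).ncard := by
  classical
  set F := (inducedEdges H (2 < ndeg T ·)).toFinset
  set S₀ := {v ∈ S.toFinset | ∃ e ∈ F, v ∈ e}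
  obtain ⟨M, hMF, hMS₀, hMdisj, hS₀⟩ :=
    exists_matching_card_le_card_add F S₀ fun v hv => (mem_filter.mp hv).2
  have hM : IsMatchingWithin T S M := by
    refine ⟨fun e he => ?_, fun e he v hv => ?_, hMdisj⟩
    · exact edgeSet_mono hHT (Set.mem_toFinset.mp (hMF he)).1
    · exact Set.mem_toFinset.mp (mem_filter.mp (hMS₀ e he v hv)).1
  have ht := ncard_le_matchingNumberOn hM
  rw [Set.ncard_coe_finset] at ht
  have hstranded : ∀ v ∈ S.toFinset \ S₀, ndeg H v ≤ 1 := by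
    intro v hv
    obtain ⟨hvS, hvS₀⟩ := mem_sdiff.mp hv
    have hv' := hS v (Set.mem_toFinset.mp hvS)
    refine ndeg_le_one_of_forall_adj_light hHT hv'.2 fun w hw => not_lt.mp fun hw' => hvS₀ ?_
    have hvw : s(v, w) ∈ F := Set.mem_toFinset.mpr ⟨hw, by simp [hv'.1, hw']⟩
    exact mem_filter.mpr ⟨hvS, s(v, w), hvw, Sym2.mem_mk_left _ _⟩
  have hdeficit : (#(S.toFinset \ S₀) : ℤ) ≤ ∑ v with 2 < ndeg T v, (2 - (ndeg H v : ℤ)) := by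
    have hsub : S.toFinset \ S₀ ⊆ ({v | 2 < ndeg T v} : Finset V) := fun v hv =>
      mem_filter.mpr ⟨mem_univ v, (hS v (Set.mem_toFinset.mp (mem_sdiff.mp hv).1)).1⟩
    calc (#(S.toFinset \ S₀) : ℤ)
        = ∑ v with 2 < ndeg T v, if v ∈ S.toFinset \ S₀ then 1 else 0 := by
          rw [sum_ite_mem, inter_eq_right.mpr hsub, sum_const, nsmul_one]
      _ ≤ ∑ v with 2 < ndeg T v, (2 - (ndeg H v : ℤ)) := by
          refine sum_le_sum fun v _ => ?_
          split_ifs with h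
          · have := hstranded v h
            omega
          · have := hdeg v
            omega
  have hsplit : #(S.toFinset \ S₀) + #S₀ = #S.toFinset :=
    card_sdiff_add_card_eq_card (filter_subset _ _)
  rw [← Set.ncard_coe_finset F, Set.coe_toFinset] at hS₀
  rw [← Set.ncard_coe_finset S.toFinset, Set.coe_toFinset] at hsplit
  omega

end LowerBound

def pathCoverOf (T : SimpleGraph V) (K : V → Set V) (M : Set (Sym2 V)) : SimpleGraph V where
  Adj x y := T.Adj x y ∧ (ndeg T x ≤ 2 ∧ ndeg T y ≤ 2 ∨ y ∈ K x ∨ x ∈ K y ∨ s(x, y) ∈ M)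
  symm := ⟨fun x y h => ⟨h.1.symm, by rw [Sym2.eq_swap]; tauto⟩⟩
  loopless := ⟨fun x h => T.irrefl h.1⟩

section PathCoverOf

variable {T : SimpleGraph V} {K : V → Set V} {M : Set (Sym2 V)}

@[simp]
lemma pathCoverOf_adj {x y : V} : (pathCoverOf T K M).Adj x y ↔
    T.Adj x y ∧ (ndeg T x ≤ 2 ∧ ndeg T y ≤ 2 ∨ y ∈ K x ∨ x ∈ K y ∨ s(x, y) ∈ M) :=
  Iff.rfl

lemma pathCoverOf_le : pathCoverOf T K M ≤ T := fun _ _ h => h.1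

lemma inducedEdges_light_pathCoverOf :
    inducedEdges (pathCoverOf T K M) (¬ 2 < ndeg T ·) = inducedEdges T (¬ 2 < ndeg T ·) := by
  ext e
  induction e using Sym2.ind with
  | _ x y =>
  simp only [inducedEdges, Set.mem_ofPred_eq, mem_edgeSet, pathCoverOf_adj, Sym2.forall_mem_pair,
    not_lt]
  exact ⟨fun h => ⟨h.1.1, h.2⟩, fun h => ⟨⟨h.1, Or.inl h.2⟩, h.2⟩⟩

lemma inducedEdges_heavy_pathCoverOf (hK : ∀ v, K v ⊆ lightNeighborSet T v)
    (hM : M ⊆ inducedEdges T (2 < ndeg T ·)) :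
    inducedEdges (pathCoverOf T K M) (2 < ndeg T ·) = M := by
  ext e
  induction e using Sym2.ind with
  | _ x y =>
  simp only [inducedEdges, Set.mem_ofPred_eq, mem_edgeSet, pathCoverOf_adj, Sym2.forall_mem_pair]
  refine ⟨fun ⟨⟨_, h⟩, hx, hy⟩ => ?_, fun h => ⟨⟨(hM h).1, Or.inr (Or.inr (Or.inr h))⟩, ?_⟩⟩
  · have hKx : y ∈ K x → ndeg T y ≤ 2 := fun h => (hK x h).2
    have hKy : x ∈ K y → ndeg T x ≤ 2 := fun h => (hK y h).2
    grind
  · simpa [Sym2.forall_mem_pair] using (hM h).2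

lemma ndeg_pathCoverOf_of_heavy [Finite V] (hK : ∀ v, K v ⊆ lightNeighborSet T v)
    (hM : M ⊆ inducedEdges T (2 < ndeg T ·)) {v : V} (hv : 2 < ndeg T v) :
    ndeg (pathCoverOf T K M) v = (K v).ncard + ndeg (fromEdgeSet M) v := by
  have hnbr : (pathCoverOf T K M).neighborSet v = K v ∪ (fromEdgeSet M).neighborSet v := by
    ext w
    simp only [mem_neighborSet, Set.mem_union, fromEdgeSet_adj, pathCoverOf_adj]
    refine ⟨fun ⟨hvw, h⟩ => ?_, fun h => ?_⟩
    · have hKw : v ∈ K w → ndeg T v ≤ 2 := fun h => (hK w h).2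
      have := hvw.ne
      grind
    · rcases h with h | ⟨h, hne⟩
      · exact ⟨(hK v h).1, Or.inr (Or.inl h)⟩
      · exact ⟨(hM h).1, Or.inr (Or.inr (Or.inr h))⟩
  have hdisj : Disjoint (K v) ((fromEdgeSet M).neighborSet v) := by
    refine Set.disjoint_left.mpr fun w hwK hwM => ?_
    have := (hK v hwK).2
    have := (hM hwM.1).2 w (Sym2.mem_mk_right _ _)
    omega
  rw [ndeg, hnbr, Set.ncard_union_eq hdisj]
  rfl

end PathCoverOf

section UpperBound

variable [Fintype V] {T : SimpleGraph V} {S : Set V}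

lemma exists_lightNeighbor_choice (hh : ∀ v, 2 < ndeg T v → ∃ w, T.Adj v w ∧ ndeg T w ≤ 2)
    (hS : S = {v | 2 < ndeg T v ∧ (lightNeighborSet T v).ncard = 1}) :
    ∃ K : V → Set V, (∀ v, K v ⊆ lightNeighborSet T v) ∧ (∀ v ∈ S, (K v).ncard = 1) ∧
      ∀ v, 2 < ndeg T v → v ∉ S → (K v).ncard = 2 := by
  choose K hKsub hKcard using fun v =>
    Set.exists_subset_card_eq (min_le_right 2 (lightNeighborSet T v).ncard)
  refine ⟨K, hKsub, fun v hv => ?_, fun v hv hvS => ?_⟩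
  · rw [hS] at hv
    rw [hKcard, hv.2]
    rfl
  · obtain ⟨w, hw⟩ := hh v hv
    have hpos : 0 < (lightNeighborSet T v).ncard := (Set.ncard_pos (Set.toFinite _)).mpr ⟨w, hw⟩
    have hne : (lightNeighborSet T v).ncard ≠ 1 := fun h => hvS (hS ▸ ⟨hv, h⟩)
    rw [hKcard]
    omega

lemma exists_cover_sum_eq_ncard_sub_matchingNumberOn (hh : ∀ v, 2 < ndeg T v → ∃ w, T.Adj v w ∧ ndeg T w ≤ 2)
    (hS : S = {v | 2 < ndeg T v ∧ (lightNeighborSet T v).ncard = 1}) :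
    ∃ H ≤ T, (∀ v, ndeg H v ≤ 2) ∧
      inducedEdges H (¬ 2 < ndeg T ·) = inducedEdges T (¬ 2 < ndeg T ·) ∧
      ∑ v with 2 < ndeg T v, (2 - (ndeg H v : ℤ)) + (inducedEdges H (2 < ndeg T ·)).ncard =
        S.ncard - matchingNumberOn T S := by
  classical
  obtain ⟨M, hM, hMcard⟩ := exists_isMatchingWithin_ncard_eq T S
  obtain ⟨K, hKsub, hKS, hKnS⟩ := exists_lightNeighbor_choice hh hS
  have hSheavy : ∀ v ∈ S, 2 < ndeg T v := fun v hv => (hS ▸ hv).1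
  have hMheavy : M ⊆ inducedEdges T (2 < ndeg T ·) := fun e he =>
    ⟨hM.1 he, fun v hv => hSheavy v (hM.2.1 e he v hv)⟩
  have hdeg (v : V) (hv : 2 < ndeg T v) := ndeg_pathCoverOf_of_heavy hKsub hMheavy hv
  refine ⟨pathCoverOf T K M, pathCoverOf_le, fun v => ?_, inducedEdges_light_pathCoverOf, ?_⟩
  · by_cases hv : 2 < ndeg T v
    · rw [hdeg v hv]
      by_cases hvS : v ∈ S
      · have := hM.ndeg_fromEdgeSet_le_one v
        rw [hKS v hvS]
        omega
      · rw [hKnS v hv hvS, hM.ndeg_fromEdgeSet_eq_zero hvS]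
    · exact (ndeg_le_of_le pathCoverOf_le v).trans (not_lt.mp hv)
  have hterm : ∀ v ∈ ({v | 2 < ndeg T v} : Finset V), 2 - (ndeg (pathCoverOf T K M) v : ℤ) =
      (if v ∈ S then 1 else 0) - ndeg (fromEdgeSet M) v := by
    intro v hv
    rw [hdeg v (mem_filter.mp hv).2, Nat.cast_add]
    split_ifs with hvS
    · rw [hKS v hvS, Nat.cast_one]; ring
    · rw [hKnS v (mem_filter.mp hv).2 hvS, Nat.cast_two]; ring
  have hScard : ∑ v with 2 < ndeg T v, (if v ∈ S then 1 else 0 : ℤ) = S.ncard := by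
    rw [sum_boole, filter_filter, ← Set.ncard_coe_finset]
    congr
    ext v
    simpa using hSheavy v
  have hMdeg : ∑ v with 2 < ndeg T v, (ndeg (fromEdgeSet M) v : ℤ) = 2 * M.ncard := by
    exact_mod_cast hM.sum_ndeg_fromEdgeSet _ hSheavy
  rw [inducedEdges_heavy_pathCoverOf hKsub hMheavy, ← hMcard, sum_congr rfl hterm,
    sum_sub_distrib, hScard, hMdeg]
  ring

end UpperBound

/-- **Theorem (Statement 2).** Let `T` be a tree with `ℓ ≥ 2` leaves in which each heavy
vertex has at least one light neighbor.  Let `S` be the set of heavy vertices with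
exactly one light neighbor, `h` the number of heavy edges, `s = |S|`, and `t` the size
of a maximum matching of the subgraph induced by `S`.  Then `P(T) = ℓ − h + s − t − 1`. -/
theorem tree_pathCoverNumber_formula {V : Type*} [Fintype V] (T : SimpleGraph V)
    (hT : T.IsTree) (hl : 2 ≤ numLeaves T)
    (hh : ∀ v, 2 < ndeg T v → ∃ w, T.Adj v w ∧ ndeg T w ≤ 2)
    (S : Set V)
    (hS : S = {v | 2 < ndeg T v ∧ {w | T.Adj v w ∧ ndeg T w ≤ 2}.ncard = 1}) :
    (pathCoverNumber T : ℤ) =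
      numLeaves T - numHeavyEdges T + S.ncard - matchingNumberOn T S - 1 := by
  have hleaves : numLeaves T ≤ Fintype.card V := by
    simpa [numLeaves] using Set.ncard_le_card {v | ndeg T v = 1}
  have : Nontrivial V := Fintype.one_lt_card_iff_nontrivial.mp (by omega)
  obtain ⟨H₀, hH₀T, hdeg₀, hlight₀, hsum₀⟩ := exists_cover_sum_eq_ncard_sub_matchingNumberOn hh hS
  have hcover₀ : numPaths H₀ ∈ {k | ∃ H ≤ T, IsLinearForest H ∧ numPaths H = k} :=
    ⟨H₀, hH₀T, ⟨hT.isAcyclic.anti hH₀T, hdeg₀⟩, rfl⟩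
  obtain ⟨H, hHT, hH, hPH⟩ : ∃ H ≤ T, IsLinearForest H ∧ numPaths H = pathCoverNumber T :=
    Nat.sInf_mem ⟨_, hcover₀⟩
  have hupper : pathCoverNumber T ≤ numPaths H₀ := Nat.sInf_le hcover₀
  have hlower := ncard_sub_matchingNumberOn_le (S := S) hHT hH.2 fun v hv => by rwa [hS] at hv
  have hlight := Set.ncard_le_ncard (inducedEdges_mono hHT (¬ 2 < ndeg T ·))
  have hpaths₀ := numPaths_eq_of_isAcyclic hT (hT.isAcyclic.anti hH₀T)
  have hpaths := numPaths_eq_of_isAcyclic hT hH.1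
  rw [hlight₀] at hpaths₀
  omega

end PaperPC
end

section
/- If a vertex v is the common center of two vines S₁ and S₂ in a graph G, then v is an internal vertex (not an endpoint) of the path containing it in every minimum path covering of G. -/
namespace PaperPC

open SimpleGraph

variable {V : Type*}

/-!
If `v` had degree at most `1` in a minimum path covering `H`, look at a vine ending at `b`
with center `v`. It is a pendant path: no edge of `G` leaves its vertex set except `bv`.
So if `H` misses `bv`, then `b` has `H`-degree at most `1` and lies on another path of `H`
than `v`, and adding `bv` merges two paths of `H`, contradicting minimality. Hence `H`
contains the edges `b₁v` and `b₂v`, which forces `b₁ = b₂`; but a light vertex adjacent to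
`v` lies on only one vine with center `v`, so `a₁ = a₂`.
-/

theorem ndeg_sup_le (H K : SimpleGraph V) (w : V) : ndeg (H ⊔ K) w ≤ ndeg H w + ndeg K w :=
  Set.ncard_union_le _ _

theorem ndeg_edge_le_one [Finite V] (x y w : V) : ndeg (edge x y) w ≤ 1 :=
  (Set.ncard_le_one).2 fun y₁ h₁ y₂ h₂ => by
    simp only [mem_neighborSet, edge_adj] at h₁ h₂
    grind

theorem ndeg_edge_of_ne {x y w : V} (hx : w ≠ x) (hy : w ≠ y) : ndeg (edge x y) w = 0 := by
  simp [ndeg, neighborSet, edge_adj, hx, hy]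

theorem eq_of_adj_of_ndeg_le_one [Finite V] {G : SimpleGraph V} {x y z : V}
    (h : ndeg G x ≤ 1) (hy : G.Adj x y) (hz : G.Adj x z) : y = z :=
  (Set.ncard_le_one).1 h y hy z hz

theorem eq_or_eq_of_adj_of_ndeg_le_two [Finite V] {G : SimpleGraph V} {x y z w : V}
    (h : ndeg G x ≤ 2) (hy : G.Adj x y) (hz : G.Adj x z) (hyz : y ≠ z) (hw : G.Adj x w) :
    w = y ∨ w = z := by
  have hpair : G.neighborSet x = {y, z} :=
    (Set.eq_of_subset_of_ncard_le (Set.pair_subset hy hz)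
      (by rwa [Set.ncard_pair hyz])).symm
  have hw' : w ∈ G.neighborSet x := hw
  rwa [hpair] at hw'

theorem ndeg_le_one_of_not_adj [Finite V] {G H : SimpleGraph V} {b v : V} (hle : H ≤ G)
    (hb : ndeg G b ≤ 2) (hbv : G.Adj b v) (hn : ¬H.Adj b v) : ndeg H b ≤ 1 := by
  have hsub : H.neighborSet b ⊆ G.neighborSet b \ {v} := fun y hy =>
    ⟨hle hy, by rintro rfl; exact hn hy⟩
  have hcard : (G.neighborSet b \ {v}).ncard + 1 = (G.neighborSet b).ncard :=
    Set.ncard_sdiff_singleton_add_one hbv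
  have hsub_le := Set.ncard_le_ncard hsub
  unfold ndeg at hb ⊢
  omega

section PathCover

variable {G H : SimpleGraph V}

theorem IsLinearForest.sup_edge [Finite V] (hH : IsLinearForest H) {x y : V}
    (hx : ndeg H x ≤ 1) (hy : ndeg H y ≤ 1) (hxy : ¬H.Reachable x y) :
    IsLinearForest (H ⊔ edge x y) := by
  refine ⟨hH.1.sup_edge_of_not_reachable hxy, fun w => (ndeg_sup_le H _ w).trans ?_⟩
  by_cases hw : w = x ∨ w = y
  · have := ndeg_edge_le_one x y w
    rcases hw with rfl | rfl <;> omega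
  · push Not at hw
    rw [ndeg_edge_of_ne hw.1 hw.2]
    exact hH.2 w

theorem numPaths_sup_edge_lt [Finite V] {x y : V} (hxy : ¬H.Reachable x y) :
    numPaths (H ⊔ edge x y) < numPaths H := by
  have := Fintype.ofFinite H.ConnectedComponent
  have := Fintype.ofFinite (H ⊔ edge x y).ConnectedComponent
  have hne : x ≠ y := fun h => hxy (h ▸ Reachable.refl x)
  have hnotinj :
      ¬(ConnectedComponent.map (Hom.ofLE (le_sup_left : H ≤ H ⊔ edge x y))).Injective :=
    fun hinj => hxy <| ConnectedComponent.eq.mp <| hinj <| ConnectedComponent.eq.mpr <|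
      Adj.reachable (by simp [edge_adj, hne])
  simpa only [numPaths, Nat.card_eq_fintype_card] using
    Fintype.card_lt_of_surjective_not_injective _ (ConnectedComponent.surjective_map_ofLE _)
      hnotinj

theorem pathCoverNumber_le (hle : H ≤ G) (hH : IsLinearForest H) :
    pathCoverNumber G ≤ numPaths H :=
  Nat.sInf_le ⟨H, hle, hH, rfl⟩

theorem IsMinPathCover.reachable_of_adj [Finite V] (hH : IsMinPathCover G H) {x y : V}
    (hxy : G.Adj x y) (hx : ndeg H x ≤ 1) (hy : ndeg H y ≤ 1) : H.Reachable x y := by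
  by_contra hn
  have hle : H ⊔ edge x y ≤ G := sup_le hH.1 ((edge_le_iff _).2 (Or.inr hxy))
  have := pathCoverNumber_le hle (hH.2.1.sup_edge hx hy hn)
  have := numPaths_sup_edge_lt hn
  rw [hH.2.2] at this
  omega

end PathCover

section Vine

variable {G : SimpleGraph V}

theorem Walk.mem_support_of_adj_of_light [Finite V] {b a v : V} (q : G.Walk b a)
    (hq : q.IsPath) (hlight : ∀ x ∈ q.support, ndeg G x ≤ 2) (ha : ndeg G a = 1)
    (hbv : G.Adj b v) (hv : v ∉ q.support) {x y : V} (hx : x ∈ q.support) (hxy : G.Adj x y) :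
    y ∈ q.support ∨ x = b ∧ y = v := by
  induction q generalizing v with
  | nil =>
    rw [Walk.support_nil, List.mem_singleton] at hx
    subst hx
    exact Or.inr ⟨rfl, eq_of_adj_of_ndeg_le_one ha.le hxy hbv⟩
  | @cons b c a hbc r ih =>
    rw [Walk.cons_isPath_iff] at hq
    have hc : c ∈ (Walk.cons hbc r).support := by simp
    rw [Walk.support_cons, List.mem_cons] at hx
    rcases hx with rfl | hx
    · rcases eq_or_eq_of_adj_of_ndeg_le_two (hlight x (by simp)) hbv hbc
        (fun h => hv (h ▸ hc)) hxy with rfl | rfl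
      · exact Or.inr ⟨rfl, rfl⟩
      · exact Or.inl hc
    · -- the tail `r` is again such a path, with `b` in the role of `v`
      have hr := ih hq.1 (fun z hz => hlight z (by simp [hz])) ha hbc.symm hq.2 hx
      rcases hr with hr | ⟨-, rfl⟩
      · exact Or.inl (by simp [hr])
      · exact Or.inl (by simp)

theorem Walk.end_eq_of_light [Finite V] {b a₁ a₂ v : V} (q₁ : G.Walk b a₁)
    (q₂ : G.Walk b a₂) (hq₁ : q₁.IsPath) (hq₂ : q₂.IsPath)
    (hlight₁ : ∀ x ∈ q₁.support, ndeg G x ≤ 2) (hlight₂ : ∀ x ∈ q₂.support, ndeg G x ≤ 2)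
    (ha₁ : ndeg G a₁ = 1) (ha₂ : ndeg G a₂ = 1) (hbv : G.Adj b v) (hv₁ : v ∉ q₁.support)
    (hv₂ : v ∉ q₂.support) : a₁ = a₂ := by
  induction q₁ generalizing v with
  | nil =>
    cases q₂ with
    | nil => rfl
    | cons hbc _ => exact absurd (by simp [eq_of_adj_of_ndeg_le_one ha₁.le hbv hbc]) hv₂
  | @cons b c a₁ hbc r ih =>
    cases q₂ with
    | nil => exact absurd (by simp [eq_of_adj_of_ndeg_le_one ha₂.le hbv hbc]) hv₁
    | @cons _ c' _ hbc' r' =>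
      have hvc : v ≠ c := fun h => hv₁ (by simp [h])
      have hvc' : v ≠ c' := fun h => hv₂ (by simp [h])
      obtain rfl : c' = c := (eq_or_eq_of_adj_of_ndeg_le_two (hlight₁ b (by simp)) hbv hbc hvc
        hbc').resolve_left hvc'.symm
      rw [Walk.cons_isPath_iff] at hq₁ hq₂
      exact ih r' hq₁.1 hq₂.1 (fun z hz => hlight₁ z (by simp [hz]))
        (fun z hz => hlight₂ z (by simp [hz])) ha₁ hbc.symm hq₁.2 hq₂.2

theorem IsMinPathCover.adj_of_pendant_path [Finite V] {H : SimpleGraph V}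
    (hH : IsMinPathCover G H) {b a v : V} (q : G.Walk b a) (hq : q.IsPath)
    (hlight : ∀ x ∈ q.support, ndeg G x ≤ 2) (ha : ndeg G a = 1) (hbv : G.Adj b v)
    (hvq : v ∉ q.support) (hv : ndeg H v ≤ 1) :
    H.Adj b v := by
  by_contra hn
  have hb := ndeg_le_one_of_not_adj hH.1 (hlight b q.start_mem_support) hbv hn
  obtain ⟨w⟩ := hH.reachable_of_adj hbv hb hv
  obtain ⟨d, -, hd, hd'⟩ := w.exists_boundary_dart {x | x ∈ q.support} q.start_mem_support hvq
  rcases Walk.mem_support_of_adj_of_light q hq hlight ha hbv hvq hd (hH.1 d.adj)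
    with h | ⟨h₁, h₂⟩
  · exact hd' h
  · exact hn (h₁ ▸ h₂ ▸ d.adj)

variable {a b v : V} {p : G.Walk a b}

theorem IsVineWithCenter.center_notMem_support (hp : IsVineWithCenter G p v) :
    v ∉ p.support := fun hv => by
  have := hp.1.2.2.1 v hv
  have := hp.2.2
  omega

theorem IsVineWithCenter.adj_of_isMinPathCover [Finite V] (hp : IsVineWithCenter G p v)
    {H : SimpleGraph V} (hH : IsMinPathCover G H) (hv : ndeg H v ≤ 1) : H.Adj b v :=
  hH.adj_of_pendant_path p.reverse hp.1.1.reverse (by simpa using hp.1.2.2.1) hp.1.2.1 hp.2.1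
    (by simpa using hp.center_notMem_support) hv

theorem IsVineWithCenter.leaf_eq [Finite V] {a' : V} {p' : G.Walk a' b}
    (hp : IsVineWithCenter G p v) (hp' : IsVineWithCenter G p' v) : a = a' :=
  Walk.end_eq_of_light p.reverse p'.reverse hp.1.1.reverse hp'.1.1.reverse
    (by simpa using hp.1.2.2.1) (by simpa using hp'.1.2.2.1) hp.1.2.1 hp'.1.2.1 hp.2.1
    (by simpa using hp.center_notMem_support) (by simpa using hp'.center_notMem_support)

end Vine

/-- **Lemma (Statement 10).** If `v` is the common center of two (distinct) vines
`p₁, p₂` of a graph `G`, then in every minimum path covering of `G` the vertex `v` is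
an internal vertex of the path containing it (i.e. it has degree 2 in the covering). -/
theorem center_of_two_vines_internal {V : Type*} [Fintype V] (G : SimpleGraph V)
    {a₁ b₁ a₂ b₂ v : V} (p₁ : G.Walk a₁ b₁) (p₂ : G.Walk a₂ b₂)
    (h₁ : IsVineWithCenter G p₁ v) (h₂ : IsVineWithCenter G p₂ v) (hne : a₁ ≠ a₂)
    (H : SimpleGraph V) (hH : IsMinPathCover G H) :
    ndeg H v = 2 := by
  by_contra hinternal
  have hv : ndeg H v ≤ 1 := by
    have := hH.2.1.2 v
    omega
  obtain rfl : b₁ = b₂ := eq_of_adj_of_ndeg_le_one hv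
    (h₁.adj_of_isMinPathCover hH hv).symm (h₂.adj_of_isMinPathCover hH hv).symm
  exact hne (h₁.leaf_eq h₂)

end PaperPC
end
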